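/- arXiv:2310.01583 — 2 statements merged into one kernel-verified Lean document; each statement's English description precedes it below -/
import Mathlib

section
/- Let v_{k,i} ∈ S^{d-1} for k ∈ [K], i ∈ [n_k], with block means h_k = (1/n_k)∑_i v_{k,i}, π̂_k = n_k/n, n = ∑_k n_k. Then (1/n)∑_{k₁,i₁} log((1/n)∑_{k₃,i₃} exp(v_{k₁,i₁}ᵀ v_{k₃,i₃}/τ)) ≥ ∑_{k₁} π̂_{k₁} log(∑_{k₃} π̂_{k₃} exp(h_{k₁}ᵀ h_{k₃}/τ)) for every τ > 0. -/
/-!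
Put `g x = log (∑ k, π̂ k * exp (⟪x, h k⟫ / τ))`. Jensen's inequality for `exp` on block `k`
gives `π̂ k * exp (⟪x, h k⟫ / τ) ≤ (1 / N) * ∑ i, exp (⟪x, v k i⟫ / τ)`, so `g x` is at most the
log-partition term at `x`. As a log-sum-exp of linear functions, `g` is convex, and Jensen's
inequality for `g` on block `k` gives `π̂ k * g (h k) ≤ (1 / N) * ∑ i, g (v k i)`. Summing over
`k` and applying the first bound at each `x = v k i` proves the inequality.
-/

open scoped RealInnerProductSpace
open Real Finset

theorem Real.convexOn_log_sum_mul_exp {ι : Type*} [Fintype ι] [Nonempty ι] (w : ι → ℝ)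
    (hw : ∀ i, 0 < w i) :
    ConvexOn ℝ Set.univ fun y : ι → ℝ => log (∑ i, w i * exp (y i)) := by
  have hS : ∀ y : ι → ℝ, 0 < ∑ i, w i * exp (y i) := fun y =>
    sum_pos (fun i _ => mul_pos (hw i) (exp_pos _)) univ_nonempty
  refine convexOn_iff_forall_pos.2 ⟨convex_univ, fun x _ y _ a b ha hb hab => ?_⟩
  obtain rfl : b = 1 - a := by linarith
  -- Hölder with exponent `1 / a`, weights `w i * exp (y i)` and values `exp (a * (x i - y i))`.
  have holder := inner_le_weight_mul_Lp_of_nonneg univ (p := a⁻¹) (one_le_inv₀ ha |>.2 (by linarith))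
    (fun i => w i * exp (y i)) (fun i => exp (a * (x i - y i)))
    (fun i => (mul_pos (hw i) (exp_pos _)).le) (fun i => (exp_pos _).le)
  have hpow : ∀ i, exp (a * (x i - y i)) ^ a⁻¹ = exp (x i - y i) := fun i => by
    rw [← exp_mul, mul_comm, inv_mul_cancel_left₀ ha.ne']
  simp only [hpow, inv_inv, mul_assoc, ← exp_add, add_sub_cancel] at holder
  calc log (∑ i, w i * exp ((a • x + (1 - a) • y) i))
      = log (∑ i, w i * exp (y i + a * (x i - y i))) := by
        congr 1; refine sum_congr rfl fun i _ => ?_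
        simp only [Pi.add_apply, Pi.smul_apply, smul_eq_mul]; ring_nf
    _ ≤ log ((∑ i, w i * exp (y i)) ^ (1 - a) * (∑ i, w i * exp (x i)) ^ a) :=
        log_le_log (hS _) holder
    _ = a • log (∑ i, w i * exp (x i)) + (1 - a) • log (∑ i, w i * exp (y i)) := by
        rw [log_mul (rpow_pos_of_pos (hS y) _).ne' (rpow_pos_of_pos (hS x) _).ne',
          log_rpow (hS y), log_rpow (hS x), smul_eq_mul, smul_eq_mul, add_comm]

theorem ConvexOn.map_mean_le {E ι : Type*} [AddCommGroup E] [Module ℝ E] [Fintype ι]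
    [Nonempty ι] {f : E → ℝ} (hf : ConvexOn ℝ Set.univ f) (p : ι → E) :
    f ((1 / (Fintype.card ι : ℝ)) • ∑ i, p i) ≤ (1 / Fintype.card ι) * ∑ i, f (p i) := by
  have hcard : (Fintype.card ι : ℝ) ≠ 0 := Nat.cast_ne_zero.2 Fintype.card_ne_zero
  simpa [smul_sum, mul_sum] using hf.map_sum_le (t := univ) (w := fun _ => 1 / (Fintype.card ι : ℝ))
    (p := p) (fun _ _ => by positivity) (by simp [hcard]) (fun _ _ => Set.mem_univ _)

theorem convexOn_log_sum_mul_exp_inner_div {E ι : Type*} [NormedAddCommGroup E]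
    [InnerProductSpace ℝ E] [Fintype ι] [Nonempty ι] (w : ι → ℝ) (hw : ∀ i, 0 < w i)
    (u : ι → E) (τ : ℝ) :
    ConvexOn ℝ Set.univ fun x : E => log (∑ i, w i * exp (⟪x, u i⟫ / τ)) := by
  simpa [Function.comp_def, div_eq_inv_mul, real_inner_comm] using
    (Real.convexOn_log_sum_mul_exp w hw).comp_linearMap
      (LinearMap.pi fun i => τ⁻¹ • innerₗ E (u i))

theorem convexOn_exp_inner_div {E : Type*} [NormedAddCommGroup E] [InnerProductSpace ℝ E]
    (x : E) (τ : ℝ) : ConvexOn ℝ Set.univ fun y : E => exp (⟪x, y⟫ / τ) := by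
  simpa [Function.comp_def, div_eq_inv_mul] using
    convexOn_exp.comp_linearMap (τ⁻¹ • innerₗ E x)

theorem stmt_3_general {d K : ℕ} (n : Fin K → ℕ) (hn : ∀ k, 0 < n k)
    (v : (k : Fin K) → Fin (n k) → EuclideanSpace ℝ (Fin d))
    (h : Fin K → EuclideanSpace ℝ (Fin d))
    (hmean : ∀ k, h k = (1 / (n k : ℝ)) • ∑ i, v k i)
    (N : ℕ) (hN : N = ∑ k, n k)
    (pihat : Fin K → ℝ) (hpi : ∀ k, pihat k = (n k : ℝ) / N)
    (τ : ℝ) :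
    (1 / (N : ℝ)) * ∑ k₁, ∑ i₁, Real.log
        ((1 / (N : ℝ)) * ∑ k₃, ∑ i₃, Real.exp (⟪v k₁ i₁, v k₃ i₃⟫ / τ))
      ≥ ∑ k₁, pihat k₁ * Real.log (∑ k₃, pihat k₃ * Real.exp (⟪h k₁, h k₃⟫ / τ)) := by
  obtain rfl | hK := K.eq_zero_or_pos
  · simp
  have : Nonempty (Fin K) := ⟨⟨0, hK⟩⟩
  have hN0 : (0 : ℝ) < N := by
    rw [hN]; exact_mod_cast sum_pos (fun k _ => hn k) univ_nonempty
  have hpos : ∀ k, 0 < pihat k := fun k => hpi k ▸ div_pos (Nat.cast_pos.2 (hn k)) hN0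
  have hblock : ∀ φ : EuclideanSpace ℝ (Fin d) → ℝ, ConvexOn ℝ Set.univ φ →
      ∀ k, pihat k * φ (h k) ≤ (1 / N) * ∑ i, φ (v k i) := by
    intro φ hφ k
    have : NeZero (n k) := ⟨(hn k).ne'⟩
    have hk := hφ.map_mean_le (v k)
    rw [Fintype.card_fin, ← hmean] at hk
    have hnk : (n k : ℝ) ≠ 0 := Nat.cast_ne_zero.2 (hn k).ne'
    calc pihat k * φ (h k) ≤ pihat k * ((1 / n k) * ∑ i, φ (v k i)) :=
          mul_le_mul_of_nonneg_left hk (hpos k).le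
      _ = (1 / N) * ∑ i, φ (v k i) := by rw [hpi k]; field_simp
  set g := fun x : EuclideanSpace ℝ (Fin d) => log (∑ k, pihat k * exp (⟪x, h k⟫ / τ))
  have hg_le : ∀ x, g x ≤ log ((1 / N) * ∑ k, ∑ i, exp (⟪x, v k i⟫ / τ)) := fun x => by
    refine log_le_log (sum_pos (fun k _ => mul_pos (hpos k) (exp_pos _)) univ_nonempty) ?_
    rw [mul_sum]
    exact sum_le_sum fun k _ => hblock _ (convexOn_exp_inner_div x τ) k
  calc ∑ k, pihat k * g (h k)
      ≤ ∑ k, (1 / N) * ∑ i, g (v k i) :=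
        sum_le_sum fun k _ => hblock g (convexOn_log_sum_mul_exp_inner_div pihat hpos h τ) k
    _ = (1 / N) * ∑ k, ∑ i, g (v k i) := (mul_sum ..).symm
    _ ≤ _ := mul_le_mul_of_nonneg_left
        (sum_le_sum fun k _ => sum_le_sum fun i _ => hg_le (v k i)) (by positivity)

theorem stmt_3 {d K : ℕ} (n : Fin K → ℕ) (hn : ∀ k, 0 < n k)
    (v : (k : Fin K) → Fin (n k) → EuclideanSpace ℝ (Fin d))
    (hv : ∀ k i, ‖v k i‖ = 1)
    (h : Fin K → EuclideanSpace ℝ (Fin d))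
    (hmean : ∀ k, h k = (1 / (n k : ℝ)) • ∑ i, v k i)
    (N : ℕ) (hN : N = ∑ k, n k)
    (pihat : Fin K → ℝ) (hpi : ∀ k, pihat k = (n k : ℝ) / N)
    (τ : ℝ) (hτ : 0 < τ) :
    (1 / (N : ℝ)) * ∑ k₁, ∑ i₁, Real.log
        ((1 / (N : ℝ)) * ∑ k₃, ∑ i₃, Real.exp (⟪v k₁ i₁, v k₃ i₃⟫ / τ))
      ≥ ∑ k₁, pihat k₁ * Real.log (∑ k₃, pihat k₃ * Real.exp (⟪h k₁, h k₃⟫ / τ)) :=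
  stmt_3_general n hn v h hmean N hN pihat hpi τ
end

section
/- Let K = 2, τ > 0, and consider the group-level objective G(h₁,h₂) on (S^{d-1})² with π₁ + π₂ = 1, α_{1,1} = α_{2,2} = α_diag > 0 and α_{1,2} = α_{2,1} = 0. Then any minimizer satisfies h₁ᵀ h₂ = −1 when d ≥ 2; i.e., the two block representations are antipodal. -/
open scoped RealInnerProductSpace

theorem stmt_11 {d : ℕ} (hd : 2 ≤ d) (τ : ℝ) (hτ : 0 < τ)
    (π₁ π₂ : ℝ) (hπ₁ : 0 < π₁) (hπ₂ : 0 < π₂) (hsum : π₁ + π₂ = 1)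
    (αdiag : ℝ) (hαdiag : 0 < αdiag)
    (G : EuclideanSpace ℝ (Fin d) → EuclideanSpace ℝ (Fin d) → ℝ)
    (hG : ∀ h₁ h₂, G h₁ h₂ =
      -(1 / τ) * (π₁ * ((π₁ * αdiag * ⟪h₁, h₁⟫ + π₂ * 0 * ⟪h₁, h₂⟫) /
          (π₁ * αdiag + π₂ * 0))
        + π₂ * ((π₁ * 0 * ⟪h₂, h₁⟫ + π₂ * αdiag * ⟪h₂, h₂⟫) /
          (π₁ * 0 + π₂ * αdiag)))
      + π₁ * Real.log (π₁ * Real.exp (⟪h₁, h₁⟫ / τ) + π₂ * Real.exp (⟪h₁, h₂⟫ / τ))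
      + π₂ * Real.log (π₁ * Real.exp (⟪h₂, h₁⟫ / τ) + π₂ * Real.exp (⟪h₂, h₂⟫ / τ)))
    (h₁ h₂ : EuclideanSpace ℝ (Fin d)) (hh₁ : ‖h₁‖ = 1) (hh₂ : ‖h₂‖ = 1)
    (hmin : ∀ g₁ g₂ : EuclideanSpace ℝ (Fin d),
      ‖g₁‖ = 1 → ‖g₂‖ = 1 → G h₁ h₂ ≤ G g₁ g₂) :
    ⟪h₁, h₂⟫ = -1 := by
  set t : ℝ := ⟪h₁, h₂⟫ with ht
  have hself1 : ⟪h₁, h₁⟫ = 1 := by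
    rw [real_inner_self_eq_norm_sq, hh₁]; norm_num
  have hself2 : ⟪h₂, h₂⟫ = 1 := by
    rw [real_inner_self_eq_norm_sq, hh₂]; norm_num
  have hcomm : ⟪h₂, h₁⟫ = t := (real_inner_comm h₂ h₁).symm
  have habs : |t| ≤ 1 := by
    have := abs_real_inner_le_norm h₁ h₂
    rwa [hh₁, hh₂, one_mul] at this
  have htlb : -1 ≤ t := neg_le_of_abs_le habs
  by_contra hne
  have htgt : -1 < t := lt_of_le_of_ne htlb (Ne.symm hne)
  -- build antipodal unit vectors
  have hd0 : 0 < d := by omega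
  set e : EuclideanSpace ℝ (Fin d) := EuclideanSpace.single ⟨0, hd0⟩ (1 : ℝ) with he
  have hne1 : ‖e‖ = 1 := by
    rw [he, EuclideanSpace.norm_single, norm_one]
  have hne2 : ‖-e‖ = 1 := by rw [norm_neg]; exact hne1
  have hee : ⟪e, e⟫ = 1 := by
    rw [real_inner_self_eq_norm_sq, hne1]; norm_num
  have heminuse : ⟪e, -e⟫ = -1 := by
    rw [inner_neg_right, hee]
  have hminusee : ⟪-e, e⟫ = -1 := by
    rw [inner_neg_left, hee]
  have hminuseminuse : ⟪-e, -e⟫ = 1 := by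
    rw [inner_neg_neg, hee]
  have key := hmin e (-e) hne1 hne2
  rw [hG h₁ h₂, hG e (-e), hself1, hself2, hcomm, hee, heminuse, hminusee,
    hminuseminuse] at key
  have hπα1 : π₁ * αdiag ≠ 0 := by positivity
  have hπα2 : π₂ * αdiag ≠ 0 := by positivity
  simp only [mul_zero, zero_mul, add_zero, zero_add, mul_one] at key
  rw [div_self hπα1, div_self hπα2] at key
  -- now the constant parts agree; extract strict inequality on logs
  have hexplt : Real.exp (-1 / τ) < Real.exp (t / τ) := by
    apply Real.exp_lt_exp.2
    exact div_lt_div_of_pos_right htgt hτ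
  have hpos1 : 0 < π₁ * Real.exp (1 / τ) + π₂ * Real.exp (-1 / τ) := by positivity
  have hpos2 : 0 < π₁ * Real.exp (-1 / τ) + π₂ * Real.exp (1 / τ) := by positivity
  have L1 : Real.log (π₁ * Real.exp (1 / τ) + π₂ * Real.exp (-1 / τ)) <
      Real.log (π₁ * Real.exp (1 / τ) + π₂ * Real.exp (t / τ)) := by
    apply Real.log_lt_log hpos1
    nlinarith [hπ₂.le, hexplt]
  have L2 : Real.log (π₁ * Real.exp (-1 / τ) + π₂ * Real.exp (1 / τ)) <
      Real.log (π₁ * Real.exp (t / τ) + π₂ * Real.exp (1 / τ)) := by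
    apply Real.log_lt_log hpos2
    nlinarith [hπ₁.le, hexplt]
  nlinarith [mul_lt_mul_of_pos_left L1 hπ₁, mul_lt_mul_of_pos_left L2 hπ₂]
end
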